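/- arXiv:2402.15065 — 3 statements merged into one kernel-verified Lean document; each statement's English description precedes it below -/
import Mathlib

section
/- Let Ω ⊆ ℂ be open and let f : Ω → ℂ be holomorphic with f'(z) ≠ 0 for all z ∈ Ω. Define φ : Ω → ℝ by φ(z) := log|f'(z)|. Then for every z ∈ Ω: φ_zz(z) − (φ_z(z))² = (1/2)·Sf(z), where Sf := f'''/f' − (3/2)(f''/f')² is the Schwarzian derivative of f. (Equivalently, the Schwarzian tensor satisfies Q(g_euc, f*g_euc) = (1/2)Sf.) -/
open Complex Filter Topology

/-- Wirtinger derivative ∂/∂z: f_z = (1/2)(∂f/∂x − i ∂f/∂y). -/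
noncomputable def wz (f : ℂ → ℂ) (z : ℂ) : ℂ :=
  (1/2) * (fderiv ℝ f z 1 - Complex.I * fderiv ℝ f z Complex.I)

/-- The Schwarzian derivative Sf = f'''/f' − (3/2)(f''/f')². -/
noncomputable def schwarzian (f : ℂ → ℂ) (z : ℂ) : ℂ :=
  deriv (deriv (deriv f)) z / deriv f z - (3/2) * (deriv (deriv f) z / deriv f z) ^ 2

/-! With φ = log |f'| = Re log f' locally, the chain rule for `∂/∂z` gives
`φ_z = (1/2) f''/f'`, which is holomorphic, so `φ_zz = (1/2) (f''/f')'` and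
`φ_zz − φ_z² = (1/2) ((f''/f')' − (1/2) (f''/f')²) = (1/2) Sf`. -/

theorem Filter.EventuallyEq.wz_eq {f g : ℂ → ℂ} {z : ℂ} (h : f =ᶠ[𝓝 z] g) :
    wz f z = wz g z := by
  rw [wz, wz, h.fderiv_eq]

theorem HasDerivAt.wz_eq {f : ℂ → ℂ} {d z : ℂ} (hf : HasDerivAt f d z) : wz f z = d := by
  rw [wz, (hf.hasFDerivAt.restrictScalars ℝ).fderiv]
  simp only [ContinuousLinearMap.coe_restrictScalars', ContinuousLinearMap.toSpanSingleton_apply,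
    smul_eq_mul]
  linear_combination (-(1/2) * d) * Complex.I_mul_I

theorem HasDerivAt.wz_ofReal_re {f : ℂ → ℂ} {d z : ℂ} (hf : HasDerivAt f d z) :
    wz (fun w => ((f w).re : ℂ)) z = (1/2) * d := by
  have hre : HasFDerivAt (fun w => ((f w).re : ℂ))
      (ofRealCLM.comp (reCLM.comp ((ContinuousLinearMap.toSpanSingleton ℂ d).restrictScalars ℝ)))
      z :=
    ofRealCLM.hasFDerivAt.comp z (reCLM.hasFDerivAt.comp z (hf.hasFDerivAt.restrictScalars ℝ))
  rw [wz, hre.fderiv]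
  simp only [ContinuousLinearMap.coe_comp, Function.comp_apply,
    ContinuousLinearMap.coe_restrictScalars', ContinuousLinearMap.toSpanSingleton_apply,
    smul_eq_mul, one_mul, ofRealCLM_apply, reCLM_apply,
    mul_re, I_re, I_im, zero_mul, zero_sub, ofReal_neg]
  linear_combination (1/2 : ℂ) * re_add_im d

/-- Rotating `g` by the unit `‖g z‖ / g z` moves `g z` onto the positive real axis, where
`Complex.log` is holomorphic, and does not change `log ‖g‖`. -/
theorem DifferentiableAt.wz_log_norm {g : ℂ → ℂ} {z : ℂ} (hg : DifferentiableAt ℂ g z)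
    (h0 : g z ≠ 0) :
    wz (fun w => (Real.log ‖g w‖ : ℂ)) z = (1/2) * (deriv g z / g z) := by
  set c : ℂ := (‖g z‖ : ℂ) / g z
  have hc_norm : ‖c‖ = 1 := by
    rw [norm_div, norm_real, norm_norm, div_self (norm_ne_zero_iff.mpr h0)]
  have hc0 : c ≠ 0 := norm_ne_zero_iff.mp (hc_norm ▸ one_ne_zero)
  have hslit : c * g z ∈ slitPlane := by
    rw [div_mul_cancel₀ _ h0]
    exact ofReal_mem_slitPlane.2 (norm_pos_iff.mpr h0)
  have hlog : (fun w => (Real.log ‖g w‖ : ℂ)) = fun w => ((Complex.log (c * g w)).re : ℂ) := by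
    funext w
    rw [log_re, norm_mul, hc_norm, one_mul]
  rw [hlog, ((hg.hasDerivAt.const_mul c).clog hslit).wz_ofReal_re, mul_div_mul_left _ _ hc0]

theorem AnalyticAt.wz_log_norm_eventuallyEq {g : ℂ → ℂ} {z : ℂ} (hg : AnalyticAt ℂ g z)
    (h0 : g z ≠ 0) :
    wz (fun w => (Real.log ‖g w‖ : ℂ)) =ᶠ[𝓝 z] fun w => (1/2) * (deriv g w / g w) := by
  filter_upwards [hg.eventually_analyticAt, hg.continuousAt.eventually_ne h0] with w hgw h0w
  exact hgw.differentiableAt.wz_log_norm h0w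

theorem AnalyticAt.wz_wz_log_norm_sub_sq {g : ℂ → ℂ} {z : ℂ} (hg : AnalyticAt ℂ g z)
    (h0 : g z ≠ 0) :
    wz (wz fun w => (Real.log ‖g w‖ : ℂ)) z - (wz (fun w => (Real.log ‖g w‖ : ℂ)) z) ^ 2 =
      (1/2) * (deriv (deriv g) z / g z - (3/2) * (deriv g z / g z) ^ 2) := by
  have hlogderiv : HasDerivAt (fun w => (1/2) * (deriv g w / g w))
      ((1/2) * ((deriv (deriv g) z * g z - deriv g z * deriv g z) / g z ^ 2)) z :=
    (hg.deriv.differentiableAt.hasDerivAt.div hg.differentiableAt.hasDerivAt h0).const_mul _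
  rw [(hg.wz_log_norm_eventuallyEq h0).wz_eq, hlogderiv.wz_eq,
    hg.differentiableAt.wz_log_norm h0]
  field_simp
  ring

theorem stmt6 (Ω : Set ℂ) (hΩ : IsOpen Ω) (f : ℂ → ℂ)
    (hf : DifferentiableOn ℂ f Ω) (hf' : ∀ z ∈ Ω, deriv f z ≠ 0) :
    ∀ z ∈ Ω,
      wz (wz (fun w => (Real.log ‖deriv f w‖ : ℂ))) z -
        (wz (fun w => (Real.log ‖deriv f w‖ : ℂ)) z) ^ 2 =
      (1/2) * schwarzian f z := by
  intro z hz
  exact ((hf.analyticOnNhd hΩ).deriv z hz).wz_wz_log_norm_sub_sq (hf' z hz)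
end

section
/- Let B be a real 2×2 matrix with det(Id + B) ≠ 0, let B̂ := (Id + B)⁻¹(Id − B), and let t ∈ ℝ satisfy det(Id + e^{−2t}·B̂) ≠ 0. Set A_t := cosh(t)·Id + sinh(t)·B and C_t := sinh(t)·Id + cosh(t)·B. Then A_t is invertible and (Id + e^{−2t}·B̂)⁻¹·(Id − e^{−2t}·B̂) = A_t⁻¹·C_t. Moreover, for every symmetric positive definite real 2×2 matrix g, setting ĝ := (Id + B)ᵀ·g·(Id + B): (1/4)·e^{2t}·(Id + e^{−2t}·B̂)ᵀ·ĝ·(Id + e^{−2t}·B̂) = A_tᵀ·g·A_t. -/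
/-!
Multiplying by `1 + B` clears the inverse in `B̂`: `(1 + B)(1 ± s B̂) = (1 ± s) + (1 ∓ s) B`, and for
`s = e^{-2t}` the coefficients are `2e^{-t} cosh t` and `2e^{-t} sinh t`. Hence
`(1 + B)(1 + e^{-2t} B̂) = 2e^{-t} A_t` and `(1 + B)(1 - e^{-2t} B̂) = 2e^{-t} C_t`: the factor `1 + B`
cancels in the quotient and is absorbed into the pullback of `g`, and `(2e^{-t})²` cancels `e^{2t}/4`.
-/

open Matrix

namespace Matrix

variable {n R : Type*} [Fintype n] [CommRing R]

theorem transpose_mul_congr_mul (M X g : Matrix n n R) :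
    Xᵀ * (Mᵀ * g * M) * X = (M * X)ᵀ * g * (M * X) := by
  simp only [transpose_mul, Matrix.mul_assoc]

theorem transpose_smul_mul_smul (c : R) (A g : Matrix n n R) :
    (c • A)ᵀ * g * (c • A) = (c * c) • (Aᵀ * g * A) := by
  rw [transpose_smul, Matrix.smul_mul, Matrix.smul_mul, Matrix.mul_smul, smul_smul]

variable [DecidableEq n]

theorem one_add_mul_one_add_smul_inv_mul {B : Matrix n n R} (hB : IsUnit (1 + B).det) (s : R) :
    (1 + B) * (1 + s • ((1 + B)⁻¹ * (1 - B))) = (1 + s) • 1 + (1 - s) • B := by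
  rw [Matrix.mul_add, Matrix.mul_one, Matrix.mul_smul, ← Matrix.mul_assoc,
    mul_nonsing_inv _ hB, Matrix.one_mul]
  module

theorem one_add_mul_one_sub_smul_inv_mul {B : Matrix n n R} (hB : IsUnit (1 + B).det) (s : R) :
    (1 + B) * (1 - s • ((1 + B)⁻¹ * (1 - B))) = (1 - s) • 1 + (1 + s) • B := by
  rw [Matrix.mul_sub, Matrix.mul_one, Matrix.mul_smul, ← Matrix.mul_assoc,
    mul_nonsing_inv _ hB, Matrix.one_mul]
  module

theorem isUnit_det_of_mul_eq_smul {M X A : Matrix n n R} {c : R} (hM : IsUnit M.det)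
    (hX : IsUnit X.det) (h : M * X = c • A) : IsUnit A.det := by
  have hdet := congrArg det h
  rw [det_mul, det_smul] at hdet
  exact isUnit_of_mul_isUnit_right (hdet ▸ hM.mul hX : IsUnit (c ^ Fintype.card n * A.det))

theorem mul_inv_mul_mul_of_isUnit_det {M : Matrix n n R} (hM : IsUnit M.det) (X Y : Matrix n n R) :
    (M * X)⁻¹ * (M * Y) = X⁻¹ * Y := by
  rw [mul_inv_rev, Matrix.mul_assoc, ← Matrix.mul_assoc M⁻¹, nonsing_inv_mul _ hM, Matrix.one_mul]

theorem smul_inv_mul_smul {A : Matrix n n R} (hA : IsUnit A.det) {c : R} (hc : IsUnit c)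
    (C : Matrix n n R) : (c • A)⁻¹ * (c • C) = A⁻¹ * C := by
  let _ := hc.invertible
  rw [Matrix.inv_smul A c hA, Matrix.smul_mul, Matrix.mul_smul, smul_smul, invOf_mul_self, one_smul]

end Matrix

namespace Real

theorem one_add_exp_neg_two_mul (t : ℝ) : 1 + exp (-2 * t) = 2 * exp (-t) * cosh t := by
  rw [cosh_eq, mul_right_comm, mul_div_cancel₀ _ two_ne_zero, add_mul, ← exp_add, ← exp_add,
    add_neg_cancel, exp_zero]
  ring_nf

theorem one_sub_exp_neg_two_mul (t : ℝ) : 1 - exp (-2 * t) = 2 * exp (-t) * sinh t := by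
  rw [sinh_eq, mul_right_comm, mul_div_cancel₀ _ two_ne_zero, sub_mul, ← exp_add, ← exp_add,
    add_neg_cancel, exp_zero]
  ring_nf

end Real

namespace Matrix

open Real

variable {n : Type*} [Fintype n] [DecidableEq n]

theorem one_add_mul_one_add_exp_smul_inv_mul {B : Matrix n n ℝ} (hB : IsUnit (1 + B).det)
    (t : ℝ) :
    (1 + B) * (1 + exp (-2 * t) • ((1 + B)⁻¹ * (1 - B))) =
      (2 * exp (-t)) • (cosh t • 1 + sinh t • B) := by
  rw [one_add_mul_one_add_smul_inv_mul hB, one_add_exp_neg_two_mul, one_sub_exp_neg_two_mul,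
    smul_add, smul_smul, smul_smul]

theorem one_add_mul_one_sub_exp_smul_inv_mul {B : Matrix n n ℝ} (hB : IsUnit (1 + B).det)
    (t : ℝ) :
    (1 + B) * (1 - exp (-2 * t) • ((1 + B)⁻¹ * (1 - B))) =
      (2 * exp (-t)) • (sinh t • 1 + cosh t • B) := by
  rw [one_add_mul_one_sub_smul_inv_mul hB, one_add_exp_neg_two_mul, one_sub_exp_neg_two_mul,
    smul_add, smul_smul, smul_smul]

end Matrix

theorem stmt13_general (B : Matrix (Fin 2) (Fin 2) ℝ) (h : (1 + B).det ≠ 0) (t : ℝ)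
    (h2 : (1 + Real.exp (-2 * t) • ((1 + B)⁻¹ * (1 - B))).det ≠ 0)
    (g : Matrix (Fin 2) (Fin 2) ℝ) :
    IsUnit (Real.cosh t • (1 : Matrix (Fin 2) (Fin 2) ℝ) + Real.sinh t • B).det ∧
    (1 + Real.exp (-2 * t) • ((1 + B)⁻¹ * (1 - B)))⁻¹ *
        (1 - Real.exp (-2 * t) • ((1 + B)⁻¹ * (1 - B))) =
      (Real.cosh t • (1 : Matrix (Fin 2) (Fin 2) ℝ) + Real.sinh t • B)⁻¹ *
        (Real.sinh t • (1 : Matrix (Fin 2) (Fin 2) ℝ) + Real.cosh t • B) ∧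
    ((1/4) * Real.exp (2 * t)) •
        ((1 + Real.exp (-2 * t) • ((1 + B)⁻¹ * (1 - B)))ᵀ * ((1 + B)ᵀ * g * (1 + B)) *
          (1 + Real.exp (-2 * t) • ((1 + B)⁻¹ * (1 - B)))) =
      (Real.cosh t • (1 : Matrix (Fin 2) (Fin 2) ℝ) + Real.sinh t • B)ᵀ * g *
        (Real.cosh t • (1 : Matrix (Fin 2) (Fin 2) ℝ) + Real.sinh t • B) := by
  have hB : IsUnit (1 + B).det := h.isUnit
  have hc : IsUnit (2 * Real.exp (-t)) := (by positivity : (2 * Real.exp (-t)) ≠ 0).isUnit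
  have hA := one_add_mul_one_add_exp_smul_inv_mul hB t
  have hAdet := isUnit_det_of_mul_eq_smul hB h2.isUnit hA
  have hscale : 1 / 4 * Real.exp (2 * t) * (2 * Real.exp (-t) * (2 * Real.exp (-t))) = 1 := by
    have : Real.exp (2 * t) * Real.exp (-t) * Real.exp (-t) = 1 := by
      rw [← Real.exp_add, ← Real.exp_add, ← Real.exp_zero]
      ring_nf
    linear_combination this
  refine ⟨hAdet, ?_, ?_⟩
  · rw [← mul_inv_mul_mul_of_isUnit_det hB, hA, one_add_mul_one_sub_exp_smul_inv_mul hB,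
      smul_inv_mul_smul hAdet hc]
  · rw [transpose_mul_congr_mul, hA, transpose_smul_mul_smul, smul_smul, hscale, one_smul]

theorem stmt13 (B : Matrix (Fin 2) (Fin 2) ℝ) (h : (1 + B).det ≠ 0) (t : ℝ)
    (h2 : (1 + Real.exp (-2 * t) • ((1 + B)⁻¹ * (1 - B))).det ≠ 0)
    (g : Matrix (Fin 2) (Fin 2) ℝ) (hg : g.PosDef) :
    IsUnit (Real.cosh t • (1 : Matrix (Fin 2) (Fin 2) ℝ) + Real.sinh t • B).det ∧
    (1 + Real.exp (-2 * t) • ((1 + B)⁻¹ * (1 - B)))⁻¹ *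
        (1 - Real.exp (-2 * t) • ((1 + B)⁻¹ * (1 - B))) =
      (Real.cosh t • (1 : Matrix (Fin 2) (Fin 2) ℝ) + Real.sinh t • B)⁻¹ *
        (Real.sinh t • (1 : Matrix (Fin 2) (Fin 2) ℝ) + Real.cosh t • B) ∧
    ((1/4) * Real.exp (2 * t)) •
        ((1 + Real.exp (-2 * t) • ((1 + B)⁻¹ * (1 - B)))ᵀ * ((1 + B)ᵀ * g * (1 + B)) *
          (1 + Real.exp (-2 * t) • ((1 + B)⁻¹ * (1 - B)))) =
      (Real.cosh t • (1 : Matrix (Fin 2) (Fin 2) ℝ) + Real.sinh t • B)ᵀ * g *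
        (Real.cosh t • (1 : Matrix (Fin 2) (Fin 2) ℝ) + Real.sinh t • B) :=
  stmt13_general B h t h2 g
end

section
/- For every c ∈ ℝ, the following are equivalent: (i) for all θ ∈ (0, π), |4·cot²θ + c² − 2·csc²θ| ≤ 2·csc²θ; (ii) |c² − 2| ≤ 2; (iii) |c| ≤ 2. -/
/-! Since `cot² θ = csc² θ - 1`, the quantity inside the absolute value is `2 csc² θ - 4 + c²`,
so the criterion at `θ` reads `4 - 4 csc² θ ≤ c² ≤ 4`. As `csc² θ ≥ 1`, the lower bound always
holds, and the condition is `c² ≤ 4` for every `θ`; at `θ = π/2` it is literally `|c² - 2| ≤ 2`. -/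

section OrderedField

variable {α : Type*} [Field α] [LinearOrder α] [IsStrictOrderedRing α]

theorem abs_sq_sub_two_le_two_iff (c : α) : |c ^ 2 - 2| ≤ 2 ↔ c ^ 2 ≤ 4 := by
  rw [abs_sub_le_iff]
  constructor
  · rintro ⟨h, -⟩
    linarith
  · intro h
    constructor <;> nlinarith [sq_nonneg c]

theorem abs_two_mul_sub_four_add_sq_le_two_mul_iff {x : α} (hx : 1 ≤ x) (c : α) :
    |2 * x - 4 + c ^ 2| ≤ 2 * x ↔ c ^ 2 ≤ 4 := by
  rw [abs_le]
  constructor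
  · rintro ⟨-, h⟩
    linarith
  · intro h
    constructor <;> nlinarith [sq_nonneg c]

theorem sq_le_four_iff_abs_le_two (c : α) : c ^ 2 ≤ 4 ↔ |c| ≤ 2 := by
  rw [show (4 : α) = 2 ^ 2 by norm_num, sq_le_sq, abs_two]

end OrderedField

namespace Real

theorem cot_sq_eq_inv_sin_sq_sub_one {θ : ℝ} (hθ : sin θ ≠ 0) :
    (cos θ / sin θ) ^ 2 = (sin θ)⁻¹ ^ 2 - 1 := by
  rw [div_pow, cos_sq', inv_pow, sub_div, div_self (pow_ne_zero 2 hθ), one_div]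

theorem one_le_inv_sin_sq {θ : ℝ} (hθ : sin θ ≠ 0) : 1 ≤ (sin θ)⁻¹ ^ 2 := by
  rw [inv_pow, one_le_inv_iff₀]
  exact ⟨by positivity, sin_sq_le_one θ⟩

end Real

theorem stmt19 (c : ℝ) :
    ((∀ θ ∈ Set.Ioo (0 : ℝ) Real.pi,
        |4 * (Real.cos θ / Real.sin θ) ^ 2 + c ^ 2 - 2 * ((Real.sin θ)⁻¹) ^ 2| ≤
          2 * ((Real.sin θ)⁻¹) ^ 2) ↔
      |c ^ 2 - 2| ≤ 2) ∧
    (|c ^ 2 - 2| ≤ 2 ↔ |c| ≤ 2) := by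
  have criterion_iff : ∀ θ ∈ Set.Ioo 0 Real.pi,
      |4 * (Real.cos θ / Real.sin θ) ^ 2 + c ^ 2 - 2 * (Real.sin θ)⁻¹ ^ 2| ≤
        2 * (Real.sin θ)⁻¹ ^ 2 ↔ c ^ 2 ≤ 4 := by
    intro θ hθ
    have hsin : Real.sin θ ≠ 0 := (Real.sin_pos_of_pos_of_lt_pi hθ.1 hθ.2).ne'
    rw [Real.cot_sq_eq_inv_sin_sq_sub_one hsin,
      show ∀ x : ℝ, 4 * (x - 1) + c ^ 2 - 2 * x = 2 * x - 4 + c ^ 2 by intro x; ring]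
    exact abs_two_mul_sub_four_add_sq_le_two_mul_iff (Real.one_le_inv_sin_sq hsin) c
  have half_pi_mem : Real.pi / 2 ∈ Set.Ioo 0 Real.pi :=
    ⟨by positivity, by linarith [Real.pi_pos]⟩
  rw [abs_sq_sub_two_le_two_iff]
  exact ⟨⟨fun h => (criterion_iff _ half_pi_mem).1 (h _ half_pi_mem),
    fun h θ hθ => (criterion_iff θ hθ).2 h⟩, sq_le_four_iff_abs_le_two c⟩
end
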